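/- arXiv:2211.14411 — 4 statements merged into one kernel-verified Lean document; each statement's English description precedes it below -/
import Mathlib

section
/- Let X be a nonempty set, C ∈ ℕ, and for each i ∈ {0,…,C} let γ_i ∈ (0,1] and p_{l,i}, p_{g,i} : X → ℝ with p_{l,i}(x) > 0 and p_{g,i}(x) > 0 for all x ∈ X; set p_i(x) := γ_i·p_{l,i}(x) + (1−γ_i)·p_{g,i}(x). Let K > 0 and define ECI(x) := K · ∏_{i=0}^{C} γ_i·p_{l,i}(x)/p_i(x). Then there exists a constant α > 0, independent of x, such that ECI(x) = α · ∏_{i=0}^{C} ρ(γ_i, p_{l,i}(x)/p_{g,i}(x)) for all x ∈ X. (Corollary 2: the expected constraint improvement is proportional to the product of relative density ratios under the TPE formulation.) -/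
/-- The relative density ratio `ρ(γ, r) = 1/(γ + (1−γ)/r)`. -/
noncomputable def rho (γ r : ℝ) : ℝ := 1 / (γ + (1 - γ) / r)

/-- Corollary 2: the expected constraint improvement is proportional to the
product of relative density ratios under the TPE formulation. -/
theorem eci_propto_prod_rho {X : Type*} [Nonempty X] (C : ℕ)
    (γ : Fin (C + 1) → ℝ) (hγ : ∀ i, γ i ∈ Set.Ioc (0 : ℝ) 1)
    (pl pg : Fin (C + 1) → X → ℝ)
    (hpl : ∀ i x, 0 < pl i x) (hpg : ∀ i x, 0 < pg i x)
    (p : Fin (C + 1) → X → ℝ)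
    (hp : ∀ i x, p i x = γ i * pl i x + (1 - γ i) * pg i x)
    (K : ℝ) (hK : 0 < K)
    (ECI : X → ℝ) (hECI : ∀ x, ECI x = K * ∏ i, γ i * pl i x / p i x) :
    ∃ α : ℝ, 0 < α ∧ ∀ x, ECI x = α * ∏ i, rho (γ i) (pl i x / pg i x) := by
  refine ⟨K * ∏ i, γ i, mul_pos hK (Finset.prod_pos fun i _ => (hγ i).1), fun x => ?_⟩
  rw [hECI, mul_assoc, ← Finset.prod_mul_distrib]
  congr 1
  apply Finset.prod_congr rfl
  intro i _
  have hγi := (hγ i).1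
  have hpli := hpl i x
  have hpgi := hpg i x
  have hpi : 0 < p i x := by
    rw [hp]
    have h1 : 0 < γ i * pl i x := mul_pos hγi hpli
    have h2 : 0 ≤ (1 - γ i) * pg i x :=
      mul_nonneg (by linarith [(hγ i).2]) hpgi.le
    linarith
  have key : γ i + (1 - γ i) / (pl i x / pg i x) = p i x / pl i x := by
    rw [hp]
    field_simp
  rw [rho, key]
  field_simp
end

section
/- Let C ∈ ℕ, and for each k ∈ {0,…,C} let γ_k ∈ [0,1] and r_k > 0. Fix an index k and consider the coordinate section t ↦ ρ(γ_k, t) · ∏_{k' ≠ k} ρ(γ_{k'}, r_{k'}). This function has derivative D_k := ((1−γ_k)/r_k²) · ρ(γ_k, r_k) · ∏_{k'=0}^{C} ρ(γ_{k'}, r_{k'}) at the point t = r_k; moreover D_k ≥ 0, and D_k = 0 if and only if γ_k = 1. -/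
lemma denom_pos {γ r : ℝ} (hγ : γ ∈ Set.Icc (0:ℝ) 1) (hr : 0 < r) :
    0 < γ + (1 - γ) / r := by
  obtain ⟨h0, h1⟩ := hγ
  rcases eq_or_lt_of_le h0 with h | h
  · rw [← h]; norm_num; simpa using hr
  · exact add_pos_of_pos_of_nonneg h (div_nonneg (by linarith) hr.le)

lemma rho_pos {γ r : ℝ} (hγ : γ ∈ Set.Icc (0:ℝ) 1) (hr : 0 < r) :
    0 < rho γ r :=
  one_div_pos.mpr (denom_pos hγ hr)

/-- The partial derivative of the c-TPE acquisition function with respect to the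
`k`-th density ratio equals `((1−γ_k)/r_k²)·ρ(γ_k,r_k)·∏_{k'} ρ(γ_{k'},r_{k'})`;
it is nonnegative, and vanishes exactly when `γ_k = 1`. -/
theorem hasDerivAt_ctpe_section (C : ℕ) (γ r : Fin (C + 1) → ℝ)
    (hγ : ∀ k, γ k ∈ Set.Icc (0 : ℝ) 1) (hr : ∀ k, 0 < r k)
    (k : Fin (C + 1)) (D : ℝ)
    (hD : D = ((1 - γ k) / (r k) ^ 2) * rho (γ k) (r k) *
      ∏ k', rho (γ k') (r k')) :
    HasDerivAt
      (fun t => rho (γ k) t * ∏ k' ∈ Finset.univ.erase k, rho (γ k') (r k'))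
      D (r k) ∧ 0 ≤ D ∧ (D = 0 ↔ γ k = 1) := by
  have hdpos := denom_pos (hγ k) (hr k)
  have hrρ := rho_pos (hγ k) (hr k)
  have hprod : (∏ k', rho (γ k') (r k')) =
      rho (γ k) (r k) * ∏ k' ∈ Finset.univ.erase k, rho (γ k') (r k') :=
    (Finset.mul_prod_erase Finset.univ _ (Finset.mem_univ k)).symm
  set P := ∏ k' ∈ Finset.univ.erase k, rho (γ k') (r k') with hPdef
  have hP : 0 < P :=
    Finset.prod_pos fun i _ => rho_pos (hγ i) (hr i)
  have hg : 0 ≤ 1 - γ k := by linarith [(hγ k).2]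
  constructor
  · -- derivative
    have hne := ne_of_gt (hr k)
    have h0 : HasDerivAt (fun t : ℝ => γ k + (1 - γ k) * t⁻¹)
        ((1 - γ k) * (-((r k) ^ 2)⁻¹)) (r k) :=
      ((hasDerivAt_inv hne).const_mul (1 - γ k)).const_add (γ k)
    have h1 : HasDerivAt (fun t : ℝ => γ k + (1 - γ k) / t)
        (-(1 - γ k) / (r k) ^ 2) (r k) := by
      have heq : (fun t : ℝ => γ k + (1 - γ k) / t) =
          (fun t : ℝ => γ k + (1 - γ k) * t⁻¹) := by
        funext t; rw [div_eq_mul_inv]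
      rw [heq]
      convert h0 using 1
      field_simp
    have h2 := (h1.inv (ne_of_gt hdpos)).mul_const P
    have hfun : (fun t => rho (γ k) t * P) =
        (fun t : ℝ => (γ k + (1 - γ k) / t)⁻¹ * P) := by
      funext t; rw [rho, one_div]
    rw [hfun]
    have hDeq : D = -(-(1 - γ k) / r k ^ 2) / (γ k + (1 - γ k) / r k) ^ 2 * P := by
      have hdne : γ k + (1 - γ k) / r k ≠ 0 := ne_of_gt hdpos
      rw [hD, hprod, rho, one_div, sq (γ k + (1 - γ k) / r k),
        div_eq_mul_inv (-(-(1 - γ k) / r k ^ 2)), mul_inv]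
      ring
    rw [hDeq]
    exact h2
  · have hDval : D = ((1 - γ k) / (r k) ^ 2) * rho (γ k) (r k) ^ 2 * P := by
      rw [hD, hprod]; ring
    refine ⟨?_, ?_, ?_⟩
    · rw [hDval]
      exact mul_nonneg (mul_nonneg (div_nonneg hg (sq_nonneg _)) (sq_nonneg _)) hP.le
    · intro h
      rw [hDval] at h
      rcases mul_eq_zero.1 h with h | h
      · rcases mul_eq_zero.1 h with h | h
        · have := (div_eq_zero_iff.1 h).resolve_right (pow_ne_zero 2 (ne_of_gt (hr k)))
          linarith
        · exact absurd h (pow_ne_zero _ (ne_of_gt hrρ))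
      · exact absurd h (ne_of_gt hP)
    · intro h; rw [hDval, h]; simp
end

section
/- Let X be a nonempty set, C ∈ ℕ, γ_0 ∈ (0,1), and γ_i = 1 for every i ∈ {1,…,C}. For each k ∈ {0,…,C} let r_k : X → ℝ with r_k(x) > 0 for all x ∈ X. Then for all x, x' ∈ X: ∏_{k=0}^{C} ρ(γ_k, r_k(x)) ≤ ∏_{k=0}^{C} ρ(γ_k, r_k(x')) if and only if r_0(x) ≤ r_0(x'). (Corollary 3: when all constraint quantiles equal 1, the c-TPE acquisition function is order-isomorphic to the objective's density ratio r_0, i.e., c-TPE falls back to the original TPE.) -/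
lemma rho_one (r : ℝ) : rho 1 r = 1 := by simp [rho]

lemma rho_le_rho_iff {γ a b : ℝ} (hγ : γ ∈ Set.Ioo (0:ℝ) 1) (ha : 0 < a) (hb : 0 < b) :
    rho γ a ≤ rho γ b ↔ a ≤ b := by
  obtain ⟨h0, h1⟩ := hγ
  have h1γ : 0 < 1 - γ := by linarith
  have da : 0 < γ + (1 - γ) / a := by positivity
  have db : 0 < γ + (1 - γ) / b := by positivity
  rw [rho, rho, one_div_le_one_div da db, add_le_add_iff_left,
    div_le_div_iff_of_pos_left h1γ hb ha]

/-- Corollary 3: when all constraint quantiles equal `1`, the c-TPE acquisition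
function is order-isomorphic to the objective's density ratio `r_0`. -/
theorem ctpe_falls_back_to_tpe {X : Type*} [Nonempty X] (C : ℕ)
    (γ : Fin (C + 1) → ℝ) (hγ0 : γ 0 ∈ Set.Ioo (0 : ℝ) 1)
    (hγi : ∀ i : Fin (C + 1), i ≠ 0 → γ i = 1)
    (r : Fin (C + 1) → X → ℝ) (hr : ∀ k x, 0 < r k x) :
    ∀ x x' : X,
      (∏ k, rho (γ k) (r k x)) ≤ (∏ k, rho (γ k) (r k x')) ↔
        r 0 x ≤ r 0 x' := by
  intro x x'
  have hprod : ∀ y : X, (∏ k, rho (γ k) (r k y)) = rho (γ 0) (r 0 y) := by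
    intro y
    rw [Fin.prod_univ_succ]
    have : ∀ i : Fin C, rho (γ i.succ) (r i.succ y) = 1 := by
      intro i
      rw [hγi i.succ (Fin.succ_ne_zero i), rho_one]
    simp [this]
  rw [hprod, hprod]
  exact rho_le_rho_iff hγ0 (hr 0 x) (hr 0 x')
end

section
/- Let X be a nonempty set, γ ∈ (0,1), and p_l, p_g : X → ℝ with p_l(x) > 0 and p_g(x) > 0 for all x ∈ X; set p(x) := γ·p_l(x) + (1−γ)·p_g(x). Let K > 0 and define EI(x) := K · p_l(x)/p(x). Then for all x, x' ∈ X: EI(x) ≤ EI(x') if and only if p_l(x)/p_g(x) ≤ p_l(x')/p_g(x'). (The TPE expected improvement is order-isomorphic to the density ratio r(x) = p_l(x)/p_g(x).) -/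
/-- The TPE expected improvement is order-isomorphic to the density ratio
`r(x) = p_l(x)/p_g(x)`. -/
theorem tpe_ei_order_iso_density_ratio {X : Type*} [Nonempty X]
    (γ : ℝ) (hγ : γ ∈ Set.Ioo (0 : ℝ) 1)
    (pl pg : X → ℝ) (hpl : ∀ x, 0 < pl x) (hpg : ∀ x, 0 < pg x)
    (p : X → ℝ) (hp : ∀ x, p x = γ * pl x + (1 - γ) * pg x)
    (K : ℝ) (hK : 0 < K)
    (EI : X → ℝ) (hEI : ∀ x, EI x = K * pl x / p x) :
    ∀ x x' : X, EI x ≤ EI x' ↔ pl x / pg x ≤ pl x' / pg x' := by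
  obtain ⟨hγ0, hγ1⟩ := hγ
  have h1γ : 0 < 1 - γ := by linarith
  intro x x'
  have hpx : 0 < p x := by rw [hp]; nlinarith [hpl x, hpg x]
  have hpx' : 0 < p x' := by rw [hp]; nlinarith [hpl x', hpg x']
  rw [hEI, hEI, div_le_div_iff₀ hpx hpx', div_le_div_iff₀ (hpg x) (hpg x'), hp, hp]
  constructor <;> intro h <;> nlinarith [mul_pos hK h1γ, mul_le_mul_of_nonneg_left h (le_of_lt (mul_pos hK h1γ))]
end
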